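/- Let X, U, Y be complex Hilbert spaces, let Σ = (A,B,C,D) be a passive system with system operator T and transfer function θ(z) = D + z·C(I − zA)⁻¹B, and let D₊ be the positive square root of I − T∘T* on X ⊕ Y. Let P_X and P_Y be the coordinate projections of X ⊕ Y onto X and Y, and define ψ(z) := P_Y∘D₊ + z·C∘(I − zA)⁻¹∘P_X∘D₊ : X ⊕ Y → Y. Then for all complex z, w with |z| < 1 and |w| < 1: I_Y − θ(z)∘θ(w)* = (1 − z·conj(w)) · (C(I − zA)⁻¹)∘((I − conj(w)·A*)⁻¹C*) + ψ(z)∘ψ(w)*. -/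

import Mathlib

/-!
Put `F(z) := P_Y + z·C(I − zA)⁻¹·P_X`, which is `ψ(z)` for `D₊ = I`. The resolvent identity
`C(I − zA)⁻¹ = C + z·C(I − zA)⁻¹A` shows that `F(z)·T` restricts to `C(I − zA)⁻¹` on `X` and to
`θ(z)` on `U`, so splitting `TT*` along `X ⊕ U` gives
`F(z)TT*F(w)* = C(I − zA)⁻¹(C(I − wA)⁻¹)* + θ(z)θ(w)*`, while directly
`F(z)F(w)* = I + z·w̄·C(I − zA)⁻¹(C(I − wA)⁻¹)*`. Since `ψ = F·D₊` and `D₊D₊* = I − TT*`,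
subtracting the two identities gives the claim. The operators `I − zA` are invertible for `|z| < 1`
because `‖A‖ ≤ ‖T‖ ≤ 1`.
-/

noncomputable section

open ContinuousLinearMap

variable {X U Y : Type*}
  [NormedAddCommGroup X] [InnerProductSpace ℂ X] [CompleteSpace X]
  [NormedAddCommGroup U] [InnerProductSpace ℂ U] [CompleteSpace U]
  [NormedAddCommGroup Y] [InnerProductSpace ℂ Y] [CompleteSpace Y]

/-- The system operator `T(x,u) = (Ax + Bu, Cx + Du)` as a block operator between the
Hilbert space direct sums `X ⊕₂ U` and `X ⊕₂ Y`. -/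
def sysOp (A : X →L[ℂ] X) (B : U →L[ℂ] X) (C : X →L[ℂ] Y) (D : U →L[ℂ] Y) :
    WithLp 2 (X × U) →L[ℂ] WithLp 2 (X × Y) :=
  (((WithLp.prodContinuousLinearEquiv 2 ℂ X Y).symm : (X × Y) →L[ℂ] WithLp 2 (X × Y)).comp
      ((A.comp (fst ℂ X U) + B.comp (snd ℂ X U)).prod
        (C.comp (fst ℂ X U) + D.comp (snd ℂ X U)))).comp
    ((WithLp.prodContinuousLinearEquiv 2 ℂ X U : WithLp 2 (X × U) →L[ℂ] (X × U)))

/-- The transfer function `θ(z) = D + z·C(I − zA)⁻¹B` of the system `(A,B,C,D)`. -/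
def transferFn (A : X →L[ℂ] X) (B : U →L[ℂ] X) (C : X →L[ℂ] Y) (D : U →L[ℂ] Y) (z : ℂ) :
    U →L[ℂ] Y :=
  D + z • ((C.comp (Ring.inverse (1 - z • A))).comp B)

/-- Coordinate projection of the Hilbert direct sum `X ⊕₂ Y` onto `X`. -/
def projX : WithLp 2 (X × Y) →L[ℂ] X :=
  (fst ℂ X Y).comp (WithLp.prodContinuousLinearEquiv 2 ℂ X Y : WithLp 2 (X × Y) →L[ℂ] (X × Y))

/-- Coordinate projection of the Hilbert direct sum `X ⊕₂ Y` onto `Y`. -/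
def projY : WithLp 2 (X × Y) →L[ℂ] Y :=
  (snd ℂ X Y).comp (WithLp.prodContinuousLinearEquiv 2 ℂ X Y : WithLp 2 (X × Y) →L[ℂ] (X × Y))

/-- The function `ψ(z) = P_Y∘D₊ + z·C(I − zA)⁻¹∘P_X∘D₊`. -/
def psiFn (A : X →L[ℂ] X) (C : X →L[ℂ] Y) (Dp : WithLp 2 (X × Y) →L[ℂ] WithLp 2 (X × Y))
    (z : ℂ) : WithLp 2 (X × Y) →L[ℂ] Y :=
  projY.comp Dp + z • ((C.comp (Ring.inverse (1 - z • A))).comp (projX.comp Dp))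

open WithLp

section DirectSum

variable {X Y V : Type*} [NormedAddCommGroup X] [InnerProductSpace ℂ X]
  [NormedAddCommGroup Y] [InnerProductSpace ℂ Y]

@[simp] lemma projX_apply (p : WithLp 2 (X × Y)) : projX p = p.fst := rfl

@[simp] lemma projY_apply (p : WithLp 2 (X × Y)) : projY p = p.snd := rfl

variable [CompleteSpace X] [CompleteSpace Y]

@[simp] lemma adjoint_projX_apply (x : X) :
    adjoint (projX : WithLp 2 (X × Y) →L[ℂ] X) x = toLp 2 (x, 0) :=
  ext_inner_right ℂ fun p => by simp [adjoint_inner_left, prod_inner_apply]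

@[simp] lemma adjoint_projY_apply (y : Y) :
    adjoint (projY : WithLp 2 (X × Y) →L[ℂ] Y) y = toLp 2 (0, y) :=
  ext_inner_right ℂ fun p => by simp [adjoint_inner_left, prod_inner_apply]

lemma adjoint_projX_comp_projX_add_adjoint_projY_comp_projY :
    adjoint (projX : WithLp 2 (X × Y) →L[ℂ] X) ∘L projX + adjoint projY ∘L projY
      = ContinuousLinearMap.id ℂ (WithLp 2 (X × Y)) := by
  ext p
  simp only [add_apply, comp_apply, projX_apply, projY_apply,
    adjoint_projX_apply, adjoint_projY_apply, ← toLp_add, Prod.mk_add_mk, add_zero, zero_add]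
  rfl

lemma comp_adjoint_eq_add [NormedAddCommGroup V] [InnerProductSpace ℂ V] [CompleteSpace V]
    (P Q : WithLp 2 (X × Y) →L[ℂ] V) :
    P ∘L adjoint Q
      = (P ∘L adjoint projX) ∘L adjoint (Q ∘L adjoint projX)
        + (P ∘L adjoint projY) ∘L adjoint (Q ∘L adjoint projY) := by
  conv_lhs => rw [← P.comp_id, ← adjoint_projX_comp_projX_add_adjoint_projY_comp_projY]
  simp only [adjoint_comp, adjoint_adjoint, comp_add, add_comp, comp_assoc]

end DirectSum

lemma Ring.inverse_one_sub_smul_eq {𝕜 R : Type*} [CommSemiring 𝕜] [Ring R] [Algebra 𝕜 R]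
    {a : R} {z : 𝕜} (h : IsUnit (1 - z • a)) :
    Ring.inverse (1 - z • a) = 1 + z • (Ring.inverse (1 - z • a) * a) := by
  have h₁ := Ring.inverse_mul_cancel (1 - z • a) h
  rw [mul_sub, mul_one, mul_smul_comm] at h₁
  exact sub_eq_iff_eq_add.mp h₁

lemma isUnit_one_sub_smul_of_norm_le_one {𝕜 R : Type*} [NormedField 𝕜] [NormedRing R]
    [NormedAlgebra 𝕜 R] [HasSummableGeomSeries R] {a : R} (ha : ‖a‖ ≤ 1) {z : 𝕜}
    (hz : ‖z‖ < 1) : IsUnit (1 - z • a) :=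
  (Units.oneSub (z • a) <| (norm_smul_le z a).trans_lt <|
    (mul_le_of_le_one_right (norm_nonneg z) ha).trans_lt hz).isUnit

lemma adjoint_ringInverse {E : Type*} [NormedAddCommGroup E] [InnerProductSpace ℂ E]
    [CompleteSpace E] (a : E →L[ℂ] E) : adjoint (Ring.inverse a) = Ring.inverse (adjoint a) := by
  rw [← star_eq_adjoint, ← Ring.inverse_star, star_eq_adjoint]

section System

variable {X U Y : Type*} [NormedAddCommGroup X] [InnerProductSpace ℂ X]
  [NormedAddCommGroup U] [InnerProductSpace ℂ U] [NormedAddCommGroup Y] [InnerProductSpace ℂ Y]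
  (A : X →L[ℂ] X) (B : U →L[ℂ] X) (C : X →L[ℂ] Y) (D : U →L[ℂ] Y)

@[simp] lemma sysOp_apply (p : WithLp 2 (X × U)) :
    sysOp A B C D p = toLp 2 (A p.fst + B p.snd, C p.fst + D p.snd) := rfl

lemma norm_le_one_of_norm_sysOp_le_one (h : ‖sysOp A B C D‖ ≤ 1) : ‖A‖ ≤ 1 := by
  refine opNorm_le_bound _ zero_le_one fun x => ?_
  calc ‖A x‖ = ‖(sysOp A B C D (toLp 2 (x, 0))).fst‖ := by simp
    _ ≤ ‖sysOp A B C D (toLp 2 (x, 0))‖ := WithLp.norm_fst_le _ _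
    _ ≤ ‖sysOp A B C D‖ * ‖x‖ := by
      simpa only [norm_toLp_fst] using le_opNorm (sysOp A B C D) (toLp 2 (x, 0))
    _ ≤ 1 * ‖x‖ := by gcongr

lemma psiFn_eq_psiFn_id_comp (Dp : WithLp 2 (X × Y) →L[ℂ] WithLp 2 (X × Y)) (z : ℂ) :
    psiFn A C Dp z = psiFn A C (.id ℂ _) z ∘L Dp := by
  simp only [psiFn, add_comp, smul_comp, comp_assoc, comp_id]

lemma psiFn_id_comp_sysOp_comp_adjoint_projX [CompleteSpace X] [CompleteSpace U] {z : ℂ}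
    (hz : IsUnit (1 - z • A)) :
    (psiFn A C (.id ℂ _) z ∘L sysOp A B C D) ∘L adjoint projX
      = C ∘L Ring.inverse (1 - z • A) := by
  conv_rhs => rw [Ring.inverse_one_sub_smul_eq hz]
  ext x
  simp [psiFn]

lemma psiFn_id_comp_sysOp_comp_adjoint_projY [CompleteSpace X] [CompleteSpace U] (z : ℂ) :
    (psiFn A C (.id ℂ _) z ∘L sysOp A B C D) ∘L adjoint projY = transferFn A B C D z := by
  ext u
  simp [psiFn, transferFn]

lemma psiFn_id_comp_adjoint_psiFn_id [CompleteSpace X] [CompleteSpace Y] (z w : ℂ) :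
    psiFn A C (.id ℂ _) z ∘L adjoint (psiFn A C (.id ℂ _) w)
      = .id ℂ Y + (z * starRingEnd ℂ w) •
          ((C ∘L Ring.inverse (1 - z • A)) ∘L adjoint (C ∘L Ring.inverse (1 - w • A))) := by
  ext y
  simp [psiFn, map_add, map_smulₛₗ, adjoint_comp, smul_smul, mul_comm]

lemma psiFn_comp_adjoint_psiFn [CompleteSpace X] [CompleteSpace U] [CompleteSpace Y]
    {Dp : WithLp 2 (X × Y) →L[ℂ] WithLp 2 (X × Y)}
    (hDp : Dp ∘L adjoint Dp = .id ℂ _ - sysOp A B C D ∘L adjoint (sysOp A B C D))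
    {z w : ℂ} (hz : IsUnit (1 - z • A)) (hw : IsUnit (1 - w • A)) :
    psiFn A C Dp z ∘L adjoint (psiFn A C Dp w)
      = .id ℂ Y + (z * starRingEnd ℂ w) •
          ((C ∘L Ring.inverse (1 - z • A)) ∘L adjoint (C ∘L Ring.inverse (1 - w • A)))
        - (C ∘L Ring.inverse (1 - z • A)) ∘L adjoint (C ∘L Ring.inverse (1 - w • A))
        - transferFn A B C D z ∘L adjoint (transferFn A B C D w) := by
  set F := psiFn A C (.id ℂ _)
  set T := sysOp A B C D
  have hFT : (F z ∘L T) ∘L adjoint (F w ∘L T)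
      = (C ∘L Ring.inverse (1 - z • A)) ∘L adjoint (C ∘L Ring.inverse (1 - w • A))
        + transferFn A B C D z ∘L adjoint (transferFn A B C D w) := by
    rw [comp_adjoint_eq_add, psiFn_id_comp_sysOp_comp_adjoint_projX A B C D hz,
      psiFn_id_comp_sysOp_comp_adjoint_projX A B C D hw,
      psiFn_id_comp_sysOp_comp_adjoint_projY, psiFn_id_comp_sysOp_comp_adjoint_projY]
  calc psiFn A C Dp z ∘L adjoint (psiFn A C Dp w)
        = F z ∘L (Dp ∘L adjoint Dp) ∘L adjoint (F w) := by
        rw [psiFn_eq_psiFn_id_comp, psiFn_eq_psiFn_id_comp A C Dp w, adjoint_comp]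
        rfl
    _ = F z ∘L adjoint (F w) - (F z ∘L T) ∘L adjoint (F w ∘L T) := by
        rw [hDp, sub_comp, comp_sub, id_comp, adjoint_comp]
        simp only [comp_assoc]
    _ = _ := by rw [psiFn_id_comp_adjoint_psiFn_id, hFT, sub_add_eq_sub_sub]

end System

theorem statement2 (A : X →L[ℂ] X) (B : U →L[ℂ] X) (C : X →L[ℂ] Y) (D : U →L[ℂ] Y)
    (hpass : ‖sysOp A B C D‖ ≤ 1)
    (Dp : WithLp 2 (X × Y) →L[ℂ] WithLp 2 (X × Y))
    (hDp_pos : Dp.IsPositive)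
    (hDp_sq : Dp.comp Dp
      = ContinuousLinearMap.id ℂ (WithLp 2 (X × Y))
        - (sysOp A B C D).comp (ContinuousLinearMap.adjoint (sysOp A B C D)))
    (z w : ℂ) (hz : ‖z‖ < 1) (hw : ‖w‖ < 1) :
    ContinuousLinearMap.id ℂ Y
        - (transferFn A B C D z).comp (ContinuousLinearMap.adjoint (transferFn A B C D w))
      = (1 - z * (starRingEnd ℂ) w) •
          ((C.comp (Ring.inverse (1 - z • A))).comp
            ((Ring.inverse (1 - (starRingEnd ℂ) w • ContinuousLinearMap.adjoint A)).comp
              (ContinuousLinearMap.adjoint C)))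
        + (psiFn A C Dp z).comp (ContinuousLinearMap.adjoint (psiFn A C Dp w)) := by
  have hA : ‖A‖ ≤ 1 := norm_le_one_of_norm_sysOp_le_one A B C D hpass
  have hDp : Dp ∘L adjoint Dp = .id ℂ _ - sysOp A B C D ∘L adjoint (sysOp A B C D) := by
    rw [hDp_pos.isSelfAdjoint.adjoint_eq, hDp_sq]
  have hG : Ring.inverse (1 - starRingEnd ℂ w • adjoint A) ∘L adjoint C
      = adjoint (C ∘L Ring.inverse (1 - w • A)) := by
    rw [adjoint_comp, adjoint_ringInverse, map_sub, map_smulₛₗ, adjoint_one]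
  rw [hG, psiFn_comp_adjoint_psiFn A B C D hDp (isUnit_one_sub_smul_of_norm_le_one hA hz)
    (isUnit_one_sub_smul_of_norm_le_one hA hw), sub_smul, one_smul]
  abel
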